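/- Let H : ℝ^{2m} → ℝ be continuously differentiable, y₀, y₁ ∈ ℝ^{2m}, and for z ∈ ℝ^{2m} let γ_z(τ) = y₀ + (z-y₀)τ + 2(z-2y₁+y₀)τ(τ-1), a(z) = ∫₀¹ ∇H(γ_z(τ)) dτ, and r(z) = -2(z-2y₁+y₀)ᵀ ∫₀¹ (2τ-1)∇H(γ_z(τ)) dτ. If z* satisfies z* = y₀ + 2hJ·a(z*) + (r(z*)/‖a(z*)‖²)·a(z*) with a(z*) ≠ 0, then H(z*) = H(y₀). -/

import Mathlib

open RealInnerProductSpace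

/-!
Along the curve `γ(τ) = y₀ + τ v + p(τ) w` with `p(0) = p(1) = 0`, the fundamental theorem of
calculus gives `H(y₀ + v) - H(y₀) = ⟪v, ∫ ∇H(γ)⟫ + ⟪w, ∫ p' ∇H(γ)⟫`; for `p(τ) = 2τ(τ - 1)` the
second term is `-r(z)`. The method's equation makes `z - y₀` the sum of a multiple of `J a`, which
is orthogonal to `a` by skew-symmetry, and of `(r / ‖a‖²) a`, so `⟪z - y₀, a⟫ = r` and the
energy difference vanishes.
-/

section LineIntegral

variable {E : Type*} [NormedAddCommGroup E] [InnerProductSpace ℝ E] [CompleteSpace E]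
  {H : E → ℝ}

theorem ContDiff.continuous_gradient (hH : ContDiff ℝ 1 H) : Continuous (gradient H) :=
  (InnerProductSpace.toDual ℝ E).symm.continuous.comp (hH.continuous_fderiv one_ne_zero)

theorem ContDiff.integral_inner_gradient_comp_eq_sub (hH : ContDiff ℝ 1 H) {c c' : ℝ → E}
    (hc : ∀ τ, HasDerivAt c (c' τ) τ) (hc' : Continuous c') (s t : ℝ) :
    ∫ τ in s..t, ⟪gradient H (c τ), c' τ⟫ = H (c t) - H (c s) := by
  have hc_cont : Continuous c := continuous_iff_continuousAt.2 fun τ ↦ (hc τ).continuousAt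
  have hg : Continuous fun τ ↦ gradient H (c τ) := hH.continuous_gradient.comp hc_cont
  have hint : Continuous fun τ ↦ ⟪gradient H (c τ), c' τ⟫ := hg.inner hc'
  refine intervalIntegral.integral_eq_sub_of_hasDerivAt (f := fun τ ↦ H (c τ)) (fun τ _ ↦ ?_)
    (hint.intervalIntegrable s t)
  have hgrad := ((hH.differentiable one_ne_zero) (c τ)).hasGradientAt.hasFDerivAt
  exact hgrad.comp_hasDerivAt τ (hc τ)

theorem intervalIntegral.integral_inner {f : ℝ → E} {s t : ℝ}
    (hf : IntervalIntegrable f MeasureTheory.volume s t) (v : E) :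
    ∫ τ in s..t, ⟪v, f τ⟫ = ⟪v, ∫ τ in s..t, f τ⟫ :=
  (innerSL ℝ v).intervalIntegral_comp_comm hf

theorem ContDiff.sub_eq_inner_integral_gradient_add_inner_integral (hH : ContDiff ℝ 1 H)
    {p p' : ℝ → ℝ} (hp : ∀ τ, HasDerivAt p (p' τ) τ) (hp' : Continuous p')
    (hp0 : p 0 = 0) (hp1 : p 1 = 0) (y₀ v w : E) :
    H (y₀ + v) - H y₀ =
      ⟪v, ∫ τ in (0:ℝ)..1, gradient H (y₀ + τ • v + p τ • w)⟫
        + ⟪w, ∫ τ in (0:ℝ)..1, p' τ • gradient H (y₀ + τ • v + p τ • w)⟫ := by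
  set c : ℝ → E := fun τ ↦ y₀ + τ • v + p τ • w
  have hc : ∀ τ, HasDerivAt c (v + p' τ • w) τ := fun τ ↦ by
    have hsum := (((hasDerivAt_id τ).smul_const v).const_add y₀).add ((hp τ).smul_const w)
    rwa [one_smul] at hsum
  have hp_cont : Continuous p := continuous_iff_continuousAt.2 fun τ ↦ (hp τ).continuousAt
  have hc_cont : Continuous c := by fun_prop
  have hg : Continuous fun τ ↦ gradient H (c τ) := hH.continuous_gradient.comp hc_cont
  have hsplit : ∀ τ, ⟪gradient H (c τ), v + p' τ • w⟫
      = ⟪v, gradient H (c τ)⟫ + ⟪w, p' τ • gradient H (c τ)⟫ := fun τ ↦ by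
    rw [inner_add_right, real_inner_smul_right, real_inner_smul_right,
      real_inner_comm v, real_inner_comm w]
  have hFTC := hH.integral_inner_gradient_comp_eq_sub hc (by fun_prop) 0 1
  simp only [hsplit, c, zero_smul, one_smul, hp0, hp1, add_zero] at hFTC
  have hg' : Continuous fun τ ↦ p' τ • gradient H (c τ) := hp'.smul hg
  rw [← hFTC, intervalIntegral.integral_add,
    intervalIntegral.integral_inner (hg.intervalIntegrable _ _),
    intervalIntegral.integral_inner (hg'.intervalIntegrable _ _)]
  · exact (continuous_const.inner hg).intervalIntegrable _ _
  · exact (continuous_const.inner hg').intervalIntegrable _ _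

end LineIntegral

section Projection

variable {E : Type*} [NormedAddCommGroup E] [InnerProductSpace ℝ E]

theorem inner_apply_self_eq_zero_of_skew {J : E → E} (hJ : ∀ v w, ⟪J v, w⟫ = -⟪v, J w⟫)
    (x : E) : ⟪J x, x⟫ = 0 := by
  have := hJ x x
  rw [real_inner_comm (J x) x] at this
  linarith

theorem inner_smul_add_div_norm_sq_smul_self {u a : E} (hu : ⟪u, a⟫ = 0) (ha : a ≠ 0)
    (s r : ℝ) : ⟪s • u + (r / ‖a‖ ^ 2) • a, a⟫ = r := by
  have : ‖a‖ ^ 2 ≠ 0 := pow_ne_zero 2 (norm_ne_zero_iff.2 ha)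
  rw [inner_add_left, real_inner_smul_left, real_inner_smul_left, hu,
    real_inner_self_eq_norm_sq]
  field_simp
  ring

end Projection

theorem stmt7_general {m : ℕ} (H : EuclideanSpace ℝ (Fin (2 * m)) → ℝ)
    (hH : ContDiff ℝ 1 H)
    (J : EuclideanSpace ℝ (Fin (2 * m)) →ₗ[ℝ] EuclideanSpace ℝ (Fin (2 * m)))
    (hJ : ∀ v w : EuclideanSpace ℝ (Fin (2 * m)), ⟪J v, w⟫ = - ⟪v, J w⟫)
    (h : ℝ) (y₀ y₁ zs : EuclideanSpace ℝ (Fin (2 * m)))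
    (γ : EuclideanSpace ℝ (Fin (2 * m)) → ℝ → EuclideanSpace ℝ (Fin (2 * m)))
    (hγ : ∀ z τ, γ z τ = y₀ + τ • (z - y₀)
        + (2 * τ * (τ - 1)) • (z - (2:ℝ) • y₁ + y₀))
    (a : EuclideanSpace ℝ (Fin (2 * m)) → EuclideanSpace ℝ (Fin (2 * m)))
    (ha : ∀ z, a z = ∫ τ in (0:ℝ)..1, gradient H (γ z τ))
    (r : EuclideanSpace ℝ (Fin (2 * m)) → ℝ)
    (hr : ∀ z, r z = -2 * ⟪z - (2:ℝ) • y₁ + y₀,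
        ∫ τ in (0:ℝ)..1, (2 * τ - 1) • gradient H (γ z τ)⟫)
    (hne : a zs ≠ 0)
    (hzs : zs = y₀ + (2 * h) • J (a zs) + (r zs / ‖a zs‖ ^ 2) • a zs) :
    H zs = H y₀ := by
  have hp : ∀ τ : ℝ, HasDerivAt (fun τ ↦ 2 * τ * (τ - 1)) (2 * (2 * τ - 1)) τ := fun τ ↦ by
    refine (((hasDerivAt_id τ).const_mul 2).mul ((hasDerivAt_id τ).sub_const 1)).congr_deriv ?_
    simp only [id]
    ring
  have henergy := hH.sub_eq_inner_integral_gradient_add_inner_integral hp (by fun_prop)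
    (by norm_num) (by norm_num) y₀ (zs - y₀) (zs - (2:ℝ) • y₁ + y₀)
  beta_reduce at henergy
  simp only [add_sub_cancel, ← hγ, ← ha, mul_smul (2:ℝ), intervalIntegral.integral_smul,
    real_inner_smul_right] at henergy
  have hproj : ⟪zs - y₀, a zs⟫ = r zs := by
    rw [sub_eq_iff_eq_add'.2 (hzs.trans (add_assoc _ _ _))]
    exact inner_smul_add_div_norm_sq_smul_self
      (inner_apply_self_eq_zero_of_skew hJ (a zs)) hne _ _
  rw [← sub_eq_zero, henergy, hproj, hr]
  ring

/-- Any solution of the corrected two-step method's nonlinear equation conserves the energy. -/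
theorem stmt7 {m : ℕ} (H : EuclideanSpace ℝ (Fin (2 * m)) → ℝ)
    (hH : ContDiff ℝ 1 H)
    (J : EuclideanSpace ℝ (Fin (2 * m)) →ₗ[ℝ] EuclideanSpace ℝ (Fin (2 * m)))
    (hJ : ∀ v w : EuclideanSpace ℝ (Fin (2 * m)), ⟪J v, w⟫ = - ⟪v, J w⟫)
    (h : ℝ) (hh : 0 < h) (y₀ y₁ zs : EuclideanSpace ℝ (Fin (2 * m)))
    (γ : EuclideanSpace ℝ (Fin (2 * m)) → ℝ → EuclideanSpace ℝ (Fin (2 * m)))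
    (hγ : ∀ z τ, γ z τ = y₀ + τ • (z - y₀)
        + (2 * τ * (τ - 1)) • (z - (2:ℝ) • y₁ + y₀))
    (a : EuclideanSpace ℝ (Fin (2 * m)) → EuclideanSpace ℝ (Fin (2 * m)))
    (ha : ∀ z, a z = ∫ τ in (0:ℝ)..1, gradient H (γ z τ))
    (r : EuclideanSpace ℝ (Fin (2 * m)) → ℝ)
    (hr : ∀ z, r z = -2 * ⟪z - (2:ℝ) • y₁ + y₀,
        ∫ τ in (0:ℝ)..1, (2 * τ - 1) • gradient H (γ z τ)⟫)
    (hne : a zs ≠ 0)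
    (hzs : zs = y₀ + (2 * h) • J (a zs) + (r zs / ‖a zs‖ ^ 2) • a zs) :
    H zs = H y₀ :=
  stmt7_general H hH J hJ h y₀ y₁ zs γ hγ a ha r hr hne hzs
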